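/- Let Γ be a group generated by a finite symmetric set S with 1 ∉ S. Let E = {(x, y) ∈ S × S : x⁻¹y ∈ S}, assume E ≠ ∅, put μ(x) = |{ y ∈ S : (x, y) ∈ E }| / |E| for x ∈ S (a probability measure on S), endow L²(S, μ) with the inner product ⟨ξ, η⟩ = Σ_{x∈S} μ(x)ξ(x)η(x) and L²(E) with the uniform probability measure, define d : L²(S, μ) → L²(E) by (dξ)(x, y) = ξ(y) − ξ(x), set Λ = d*d/2, and let P be the orthogonal projection of L²(S, μ) onto the constant functions. Let λ > 0 and suppose λ⁻¹Λ + P − I is positive semidefinite on L²(S, μ) (which holds when the link graph (S, E) is connected and the spectrum of Λ is contained in {0} ∪ [λ, ∞)). Then there exist elements ξᵢ ∈ ℝ[Γ], i ∈ S, such that Δ_μ² − (2 − λ⁻¹)Δ_μ = Σ_{i∈S} ξᵢ*ξᵢ. In particular, if λ > 1/2 then Δ_μ² − κΔ_μ is a sum of hermitian squares for κ = 2 − λ⁻¹ > 0. -/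

import Mathlib

open MonoidAlgebra Finset RealInnerProductSpace

/-- The involution `ξ*(x) = ξ(x⁻¹)` on the real group algebra `ℝ[Γ]`. -/
def astar {Γ : Type*} [Group Γ] (ξ : MonoidAlgebra ℝ Γ) : MonoidAlgebra ℝ Γ :=
  MonoidAlgebra.ofCoeff (Finsupp.equivMapDomain (Equiv.inv Γ) ξ.coeff)

/-- The augmentation character `ℝ[Γ] → ℝ`, `ξ ↦ Σ_x ξ(x)`. -/
noncomputable def aug (Γ : Type*) [Group Γ] : MonoidAlgebra ℝ Γ →ₐ[ℝ] ℝ :=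
  MonoidAlgebra.lift ℝ ℝ Γ 1

/-- The augmentation ideal `I[Γ] = {ξ ∈ ℝ[Γ] : Σ_x ξ(x) = 0}`, as an `ℝ`-submodule. -/
noncomputable def augIdeal (Γ : Type*) [Group Γ] : Submodule ℝ (MonoidAlgebra ℝ Γ) :=
  LinearMap.ker (aug Γ).toLinearMap

/-- `Σ²ℝ[Γ]`, the set of finite sums of hermitian squares in `ℝ[Γ]`. -/
def SOS (Γ : Type*) [Group Γ] : Set (MonoidAlgebra ℝ Γ) :=
  {ξ | ∃ (n : ℕ) (f : Fin n → MonoidAlgebra ℝ Γ), ξ = ∑ i, astar (f i) * f i}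

/-- `Σ²I[Γ]`, the set of finite sums of hermitian squares of elements of `I[Γ]`. -/
def SOSI (Γ : Type*) [Group Γ] : Set (MonoidAlgebra ℝ Γ) :=
  {ξ | ∃ (n : ℕ) (f : Fin n → MonoidAlgebra ℝ Γ),
    (∀ i, f i ∈ augIdeal Γ) ∧ ξ = ∑ i, astar (f i) * f i}

/-!
Let `M` be the matrix of the form `⟨(λ⁻¹Λ + P − I) f, f⟩_μ` in the basis of point masses on `S`.
It is positive semidefinite by hypothesis, so `M = Bᵀ B`, and evaluating the form at the vector
`(1 − x)_{x ∈ S}` of `ℝ[Γ]`, that is forming `Σ M_{xy} (1 − x)* (1 − y)`, gives the sum of hermitian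
squares `Σ_i ξ_i* ξ_i` with `ξ_i = Σ_x B_{ix} (1 − x)`. Computed term by term, the same element is
`λ⁻¹ Δ_μ + Δ_μ² − 2 Δ_μ`: the Dirichlet part gives `Σ_{(x,y) ∈ E} (2 − x⁻¹y − y⁻¹x) = 2|E| Δ_μ`
because `x⁻¹y` is distributed on `E` according to `|E| μ`, the projection gives `Δ_μ* Δ_μ = Δ_μ²`
by symmetry of `μ`, and the identity gives `Σ μ(x) (2 − x − x⁻¹) = 2 Δ_μ`.
-/

section Involution

variable {Γ : Type*} [Group Γ]

lemma astar_coeff (ξ : MonoidAlgebra ℝ Γ) (g : Γ) : (astar ξ).coeff g = ξ.coeff g⁻¹ := rfl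

variable (Γ) in
def astarₗ : MonoidAlgebra ℝ Γ →ₗ[ℝ] MonoidAlgebra ℝ Γ where
  toFun := astar
  map_add' ξ η := by ext g; simp [astar_coeff]
  map_smul' c ξ := by ext g; simp [astar_coeff]

@[simp]
lemma astarₗ_apply (ξ : MonoidAlgebra ℝ Γ) : astarₗ Γ ξ = astar ξ := rfl

lemma astar_single (g : Γ) (c : ℝ) : astar (single g c) = single g⁻¹ c :=
  congrArg ofCoeff (Finsupp.equivMapDomain_single _ _ _)

lemma astar_sub (ξ η : MonoidAlgebra ℝ Γ) : astar (ξ - η) = astar ξ - astar η :=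
  map_sub (astarₗ Γ) ξ η

lemma astar_one : astar (1 : MonoidAlgebra ℝ Γ) = 1 := by
  rw [one_def, astar_single, inv_one]

lemma astar_sub_single_mul_self (x y : Γ) :
    astar (single x 1 - single y 1) * (single x 1 - single y 1)
      = (2 : ℝ) • 1 - single (x⁻¹ * y) (1 : ℝ) - single (y⁻¹ * x) 1 := by
  rw [astar_sub, astar_single, astar_single, sub_mul, mul_sub, mul_sub, single_mul_single,
    single_mul_single, single_mul_single, single_mul_single, inv_mul_cancel, inv_mul_cancel,
    one_mul, ← one_def, two_smul]
  abel

end Involution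

section HermEval

open Matrix

variable {ι κ A : Type*} [Fintype ι] [Fintype κ] [Ring A] [Algebra ℝ A]

def hermEval (φ : A →ₗ[ℝ] A) (b : ι → A) : Matrix ι ι ℝ →ₗ[ℝ] A where
  toFun M := ∑ x, ∑ y, M x y • (φ (b x) * b y)
  map_add' M N := by simp [add_smul, Finset.sum_add_distrib]
  map_smul' c M := by simp [mul_smul, Finset.smul_sum]

variable (φ : A →ₗ[ℝ] A) (b : ι → A)

lemma hermEval_apply (M : Matrix ι ι ℝ) :
    hermEval φ b M = ∑ x, ∑ y, M x y • (φ (b x) * b y) := rfl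

lemma hermEval_vecMulVec (u v : ι → ℝ) :
    hermEval φ b (vecMulVec u v) = φ (∑ x, u x • b x) * ∑ y, v y • b y := by
  simp [hermEval_apply, vecMulVec_apply, Finset.sum_mul_sum, mul_smul, smul_comm (v _)]

lemma hermEval_diagonal [DecidableEq ι] (d : ι → ℝ) :
    hermEval φ b (diagonal d) = ∑ x, d x • (φ (b x) * b x) := by
  simp [hermEval_apply, diagonal_apply, ite_smul]

lemma transpose_mul_self_eq_sum_vecMulVec {ι : Type*} (B : Matrix κ ι ℝ) :
    Bᵀ * B = ∑ i, vecMulVec (B i) (B i) := by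
  ext x y
  simp [Matrix.mul_apply, vecMulVec_apply, Matrix.sum_apply]

lemma hermEval_transpose_mul_self (B : Matrix κ ι ℝ) :
    hermEval φ b (Bᵀ * B) = ∑ i, φ (∑ x, B i x • b x) * ∑ x, B i x • b x := by
  rw [transpose_mul_self_eq_sum_vecMulVec, map_sum]
  simp only [hermEval_vecMulVec]

open scoped MatrixOrder in
lemma Matrix.PosSemidef.exists_hermEval_eq_sum [DecidableEq ι] {M : Matrix ι ι ℝ}
    (hM : M.PosSemidef) : ∃ ξ : ι → A, hermEval φ b M = ∑ i, φ (ξ i) * ξ i := by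
  obtain ⟨B, rfl⟩ := CStarAlgebra.nonneg_iff_eq_star_mul_self.mp hM.nonneg
  rw [star_eq_conjTranspose, conjTranspose_eq_transpose_of_trivial, hermEval_transpose_mul_self]
  exact ⟨_, rfl⟩

lemma dotProduct_mulVec_eq_hermEval (M : Matrix ι ι ℝ) (f : ι → ℝ) :
    f ⬝ᵥ M *ᵥ f = hermEval LinearMap.id f M := by
  simp only [hermEval_apply, dotProduct, mulVec, Finset.mul_sum, smul_eq_mul, LinearMap.id_apply]
  exact Finset.sum_congr rfl fun x _ => Finset.sum_congr rfl fun y _ => by ring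

end HermEval

section LinkGraph

variable {Γ : Type*} [Group Γ] [DecidableEq Γ]

variable (S : Finset Γ) in
def linkEdges : Finset (Γ × Γ) := (S ×ˢ S).filter fun p => p.1⁻¹ * p.2 ∈ S

variable (S : Finset Γ) in
def linkDegree (x : Γ) : ℕ := #(S.filter fun y => x⁻¹ * y ∈ S)

variable {S : Finset Γ}

lemma mem_linkEdges {p : Γ × Γ} : p ∈ linkEdges S ↔ (p.1 ∈ S ∧ p.2 ∈ S) ∧ p.1⁻¹ * p.2 ∈ S := by
  simp [linkEdges]

lemma swap_mem_linkEdges (hS : ∀ s ∈ S, s⁻¹ ∈ S) {p : Γ × Γ} (hp : p ∈ linkEdges S) :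
    p.swap ∈ linkEdges S := by
  rw [mem_linkEdges] at hp ⊢
  exact ⟨hp.1.symm, by simpa using hS _ hp.2⟩

lemma sum_linkDegree : ∑ x ∈ S, linkDegree S x = #(linkEdges S) := by
  simp only [linkDegree, linkEdges, card_filter, sum_product]

lemma linkDegree_inv (x : Γ) : linkDegree S x⁻¹ = linkDegree S x := by
  refine card_nbij' (x * ·) (x⁻¹ * ·) ?_ ?_ ?_ ?_ <;> intro y <;> simp +contextual

lemma card_linkEdges_filter (hS : ∀ s ∈ S, s⁻¹ ∈ S) {s : Γ} (hs : s ∈ S) :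
    #{p ∈ linkEdges S | p.1⁻¹ * p.2 = s} = linkDegree S s := by
  refine card_nbij' (fun p => p.1⁻¹) (fun y => (y⁻¹, y⁻¹ * s)) ?_ ?_ ?_ ?_
  · rintro ⟨a, b⟩ hp
    simp only [coe_filter, mem_linkEdges, Set.mem_ofPred_eq] at hp ⊢
    obtain ⟨⟨⟨ha, hb⟩, -⟩, rfl⟩ := hp
    exact ⟨hS _ ha, by simpa using hS _ hb⟩
  · intro y hy
    simp only [coe_filter, mem_linkEdges, Set.mem_ofPred_eq] at hy ⊢
    exact ⟨⟨⟨hS _ hy.1, by simpa using hS _ hy.2⟩, by simpa⟩, by group⟩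
  · rintro ⟨a, b⟩ hp
    simp only [coe_filter, Set.mem_ofPred_eq] at hp
    simp [← hp.2]
  · intro y _
    simp

end LinkGraph

lemma eq_sum_single_of_coeff_eq_zero {R M : Type*} [Semiring R] {S : Finset M}
    {μ : MonoidAlgebra R M} (hμ0 : ∀ x, x ∉ S → μ.coeff x = 0) :
    μ = ∑ x ∈ S, single x (μ.coeff x) := by
  classical
  ext g
  by_cases hg : g ∈ S <;> simp [coeff_sum, Finsupp.single_apply, hg, hμ0]

section Laplacian

variable {Γ : Type*} [Group Γ] {S : Finset Γ} {μ : MonoidAlgebra ℝ Γ}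

lemma astar_eq_sum_single (hμ0 : ∀ x, x ∉ S → μ.coeff x = 0) :
    astar μ = ∑ x ∈ S, single x⁻¹ (μ.coeff x) := by
  conv_lhs => rw [eq_sum_single_of_coeff_eq_zero hμ0]
  exact (map_sum (astarₗ Γ) _ _).trans (sum_congr rfl fun x _ => astar_single x _)

lemma sum_coeff_smul_one_sub_single (hμ0 : ∀ x, x ∉ S → μ.coeff x = 0)
    (hμ1 : ∑ x ∈ S, μ.coeff x = 1) :
    ∑ x ∈ S, μ.coeff x • (1 - single x (1 : ℝ)) = 1 - μ := by
  simp only [smul_sub, smul_single', mul_one, sum_sub_distrib, ← sum_smul, hμ1, one_smul,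
    ← eq_sum_single_of_coeff_eq_zero hμ0]

lemma sum_coeff_smul_astar_mul_self (hμ0 : ∀ x, x ∉ S → μ.coeff x = 0)
    (hμ1 : ∑ x ∈ S, μ.coeff x = 1) (hμ : astar μ = μ) :
    ∑ x ∈ S, μ.coeff x • (astar (1 - single x 1) * (1 - single x 1)) = (2 : ℝ) • (1 - μ) := by
  have h (x : Γ) : astar (1 - single x 1) * (1 - single x 1)
      = (2 : ℝ) • 1 - single x (1 : ℝ) - single x⁻¹ 1 := by
    have := astar_sub_single_mul_self 1 x
    rwa [inv_one, one_mul, mul_one, ← one_def] at this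
  simp only [h, smul_sub, smul_single', mul_one, sum_sub_distrib, ← sum_smul, hμ1, one_smul,
    ← eq_sum_single_of_coeff_eq_zero hμ0, ← astar_eq_sum_single hμ0, hμ]
  module

end Laplacian

section LinkMeasure

variable {Γ : Type*} [Group Γ] [DecidableEq Γ] {S : Finset Γ} {μ : MonoidAlgebra ℝ Γ}

variable (S) in
def IsLinkMeasure (μ : MonoidAlgebra ℝ Γ) : Prop :=
  (∀ x ∈ S, μ.coeff x = linkDegree S x / #(linkEdges S)) ∧ ∀ x, x ∉ S → μ.coeff x = 0

lemma IsLinkMeasure.sum_coeff (hμ : IsLinkMeasure S μ) (hE : (linkEdges S).Nonempty) :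
    ∑ x ∈ S, μ.coeff x = 1 := by
  rw [sum_congr rfl hμ.1, ← sum_div, ← Nat.cast_sum, sum_linkDegree]
  exact div_self (by exact_mod_cast hE.card_pos.ne')

lemma IsLinkMeasure.astar_eq (hS : ∀ s ∈ S, s⁻¹ ∈ S) (hμ : IsLinkMeasure S μ) :
    astar μ = μ := by
  ext g
  rw [astar_coeff]
  by_cases hg : g ∈ S
  · rw [hμ.1 g hg, hμ.1 _ (hS g hg), linkDegree_inv]
  · rw [hμ.2 g hg, hμ.2 _ fun h => hg (by simpa using hS _ h)]

lemma IsLinkMeasure.sum_linkEdges_single (hS : ∀ s ∈ S, s⁻¹ ∈ S) (hμ : IsLinkMeasure S μ)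
    (hE : (linkEdges S).Nonempty) :
    ∑ p ∈ linkEdges S, single (p.1⁻¹ * p.2) (1 : ℝ) = (#(linkEdges S) : ℝ) • μ := by
  ext g
  simp only [coeff_sum, coeff_smul, Finsupp.coe_finsetSum, Finset.sum_apply, coeff_single,
    Finsupp.single_apply, sum_boole, Finsupp.smul_apply, smul_eq_mul]
  by_cases hg : g ∈ S
  · rw [card_linkEdges_filter hS hg, hμ.1 g hg,
      mul_div_cancel₀ _ (by exact_mod_cast hE.card_pos.ne')]
  · rw [hμ.2 g hg, mul_zero, Nat.cast_eq_zero, card_eq_zero, filter_eq_empty_iff]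
    exact fun p hp hpg => hg (hpg ▸ (mem_linkEdges.1 hp).2)

lemma IsLinkMeasure.sum_linkEdges_astar_mul_self (hS : ∀ s ∈ S, s⁻¹ ∈ S)
    (hμ : IsLinkMeasure S μ) (hE : (linkEdges S).Nonempty) :
    ∑ p ∈ linkEdges S, astar (single p.1 1 - single p.2 1) * (single p.1 1 - single p.2 1)
      = (2 * #(linkEdges S) : ℝ) • (1 - μ) := by
  have hswap : ∑ p ∈ linkEdges S, single (p.2⁻¹ * p.1) (1 : ℝ)
      = ∑ p ∈ linkEdges S, single (p.1⁻¹ * p.2) (1 : ℝ) :=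
    sum_nbij' Prod.swap Prod.swap (fun _ => swap_mem_linkEdges hS) (fun _ => swap_mem_linkEdges hS)
      (fun _ _ => rfl) (fun _ _ => rfl) (fun _ _ => rfl)
  simp only [astar_sub_single_mul_self, sum_sub_distrib, sum_const, hswap,
    hμ.sum_linkEdges_single hS hE, ← Nat.cast_smul_eq_nsmul ℝ]
  module

end LinkMeasure

section SpectralGapMatrix

open Matrix

variable {Γ : Type*} [DecidableEq Γ] (S : Finset Γ)

def edgeVec (p : Γ × Γ) (x : S) : ℝ :=
  (if (x : Γ) = p.2 then 1 else 0) - if (x : Γ) = p.1 then 1 else 0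

/-- For `w = μ` and `c = λ⁻¹ / (2|E|)`, the matrix of the form `⟨(λ⁻¹Λ + P − I) f, f⟩_μ`
in the basis of point masses on `S`. -/
def spectralGapMatrix (E : Finset (Γ × Γ)) (w : Γ → ℝ) (c : ℝ) : Matrix S S ℝ :=
  c • ∑ p ∈ E, vecMulVec (edgeVec S p) (edgeVec S p)
    + vecMulVec (fun x : S => w x) (fun x : S => w x) - diagonal fun x : S => w x

variable {S}

lemma sum_edgeVec_smul {M : Type*} [AddCommGroup M] [Module ℝ M] {p : Γ × Γ} (h1 : p.1 ∈ S)
    (h2 : p.2 ∈ S) (b : Γ → M) : ∑ x : S, edgeVec S p x • b x = b p.2 - b p.1 :=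
  (sum_coe_sort S fun g =>
      ((if g = p.2 then (1 : ℝ) else 0) - if g = p.1 then 1 else 0) • b g).trans
    (by simp [sub_smul, ite_smul, sum_sub_distrib, h1, h2])

lemma hermEval_spectralGapMatrix {A : Type*} [Ring A] [Algebra ℝ A] (φ : A →ₗ[ℝ] A) (b : Γ → A)
    {E : Finset (Γ × Γ)} (hE : ∀ p ∈ E, p.1 ∈ S ∧ p.2 ∈ S) (w : Γ → ℝ) (c : ℝ) :
    hermEval φ (fun x : S => b x) (spectralGapMatrix S E w c)
      = c • ∑ p ∈ E, φ (b p.2 - b p.1) * (b p.2 - b p.1)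
        + φ (∑ x ∈ S, w x • b x) * ∑ x ∈ S, w x • b x - ∑ x ∈ S, w x • (φ (b x) * b x) := by
  rw [spectralGapMatrix, map_sub, map_add, map_smul, map_sum, hermEval_vecMulVec,
    hermEval_diagonal, sum_coe_sort S fun x => w x • b x,
    sum_coe_sort S fun x => w x • (φ (b x) * b x)]
  congr 3
  refine sum_congr rfl fun p hp => ?_
  rw [hermEval_vecMulVec, sum_edgeVec_smul (hE p hp).1 (hE p hp).2]

lemma spectralGapMatrix_isHermitian (E : Finset (Γ × Γ)) (w : Γ → ℝ) (c : ℝ) :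
    (spectralGapMatrix S E w c).IsHermitian := by
  ext x y
  simp only [spectralGapMatrix, conjTranspose_apply, star_trivial, Matrix.sub_apply,
    Matrix.add_apply, Matrix.smul_apply, Matrix.sum_apply, vecMulVec_apply, diagonal_apply,
    mul_comm, eq_comm]
  split_ifs with h <;> simp [h]

lemma spectralGapMatrix_posSemidef {E : Finset (Γ × Γ)} (hE : ∀ p ∈ E, p.1 ∈ S ∧ p.2 ∈ S)
    {w : Γ → ℝ} {c : ℝ} (hQ : ∀ f : Γ → ℝ, 0 ≤ c * ∑ p ∈ E, (f p.2 - f p.1) ^ 2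
      + (∑ x ∈ S, w x * f x) ^ 2 - ∑ x ∈ S, w x * f x ^ 2) :
    (spectralGapMatrix S E w c).PosSemidef := by
  refine posSemidef_iff_dotProduct_mulVec.2 ⟨spectralGapMatrix_isHermitian E w c, fun f => ?_⟩
  obtain ⟨F, rfl⟩ : ∃ F : Γ → ℝ, (fun x : S => F x) = f :=
    ⟨fun g => if h : g ∈ S then f ⟨g, h⟩ else 0, funext fun x => dif_pos x.2⟩
  rw [star_trivial, dotProduct_mulVec_eq_hermEval, hermEval_spectralGapMatrix _ _ hE]
  simpa [sq, mul_assoc] using hQ F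

end SpectralGapMatrix

lemma IsLinkMeasure.hermEval_spectralGapMatrix_one_sub_single {Γ : Type*} [Group Γ]
    [DecidableEq Γ] {S : Finset Γ} (hS : ∀ s ∈ S, s⁻¹ ∈ S) {μ : MonoidAlgebra ℝ Γ}
    (hμ : IsLinkMeasure S μ) (hE : (linkEdges S).Nonempty) (t : ℝ) :
    hermEval (astarₗ Γ) (fun x : S => 1 - single (x : Γ) 1)
        (spectralGapMatrix S (linkEdges S) μ.coeff (t * (2 * (#(linkEdges S) : ℝ))⁻¹))
      = (1 - μ) * (1 - μ) - (2 - t) • (1 - μ) := by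
  have hμ1 := hμ.sum_coeff hE
  have hμ0 := hμ.2
  rw [hermEval_spectralGapMatrix _ (fun g => 1 - single g 1) fun p hp => (mem_linkEdges.1 hp).1]
  simp only [sub_sub_sub_cancel_left, astarₗ_apply]
  rw [hμ.sum_linkEdges_astar_mul_self hS hE, sum_coeff_smul_one_sub_single hμ0 hμ1,
    sum_coeff_smul_astar_mul_self hμ0 hμ1 (hμ.astar_eq hS), astar_sub, astar_one, hμ.astar_eq hS,
    smul_smul, inv_mul_cancel_right₀ (by positivity)]
  module

theorem stmt17_general {Γ : Type*} [Group Γ] [DecidableEq Γ] (S : Finset Γ)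
    (hSsymm : ∀ s ∈ S, s⁻¹ ∈ S)
    (E : Finset (Γ × Γ)) (hE : E = (S ×ˢ S).filter (fun p => p.1⁻¹ * p.2 ∈ S))
    (hEne : E.Nonempty)
    (μ : MonoidAlgebra ℝ Γ)
    (hμS : ∀ x ∈ S, μ.coeff x = ((S.filter (fun y => x⁻¹ * y ∈ S)).card : ℝ) / (E.card : ℝ))
    (hμ0 : ∀ x : Γ, x ∉ S → μ.coeff x = 0)
    (lam : ℝ)
    (hPSD : ∀ f : Γ → ℝ,
      0 ≤ lam⁻¹ * (1 / 2) * ((E.card : ℝ)⁻¹ * ∑ p ∈ E, (f p.2 - f p.1) ^ 2)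
          + (∑ x ∈ S, μ.coeff x * f x) ^ 2 - ∑ x ∈ S, μ.coeff x * f x ^ 2) :
    (∃ ξ : {x // x ∈ S} → MonoidAlgebra ℝ Γ,
      (1 - μ) * (1 - μ) - (2 - lam⁻¹) • (1 - μ) = ∑ i : {x // x ∈ S}, astar (ξ i) * ξ i) ∧
    ((1 / 2 : ℝ) < lam → (0 : ℝ) < 2 - lam⁻¹) := by
  obtain rfl : E = linkEdges S := hE
  refine ⟨?_, fun h => sub_pos.2 ((inv_lt_comm₀ (by linarith) two_pos).2 (by linarith))⟩
  have hM := spectralGapMatrix_posSemidef (w := μ.coeff) (c := lam⁻¹ * (2 * (#(linkEdges S) : ℝ))⁻¹)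
    (fun p hp => (mem_linkEdges.1 hp).1) fun f => by
      convert hPSD f using 3
      rw [mul_inv]
      ring
  obtain ⟨ξ, hξ⟩ := hM.exists_hermEval_eq_sum (astarₗ Γ) fun x : S => 1 - single (x : Γ) 1
  rw [IsLinkMeasure.hermEval_spectralGapMatrix_one_sub_single hSsymm ⟨hμS, hμ0⟩ hEne] at hξ
  exact ⟨ξ, hξ⟩

/-- the Żuk/Ballmann–Świątkowski spectral criterion, in witnessed form. -/
theorem stmt17 {Γ : Type*} [Group Γ] [DecidableEq Γ] (S : Finset Γ)
    (hSsymm : ∀ s ∈ S, s⁻¹ ∈ S) (hone : (1 : Γ) ∉ S)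
    (hSgen : Subgroup.closure (S : Set Γ) = ⊤)
    (E : Finset (Γ × Γ)) (hE : E = (S ×ˢ S).filter (fun p => p.1⁻¹ * p.2 ∈ S))
    (hEne : E.Nonempty)
    (μ : MonoidAlgebra ℝ Γ)
    (hμS : ∀ x ∈ S, μ.coeff x = ((S.filter (fun y => x⁻¹ * y ∈ S)).card : ℝ) / (E.card : ℝ))
    (hμ0 : ∀ x : Γ, x ∉ S → μ.coeff x = 0)
    (lam : ℝ) (hlam : 0 < lam)
    (hPSD : ∀ f : Γ → ℝ,
      0 ≤ lam⁻¹ * (1 / 2) * ((E.card : ℝ)⁻¹ * ∑ p ∈ E, (f p.2 - f p.1) ^ 2)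
          + (∑ x ∈ S, μ.coeff x * f x) ^ 2 - ∑ x ∈ S, μ.coeff x * f x ^ 2) :
    (∃ ξ : {x // x ∈ S} → MonoidAlgebra ℝ Γ,
      (1 - μ) * (1 - μ) - (2 - lam⁻¹) • (1 - μ) = ∑ i : {x // x ∈ S}, astar (ξ i) * ξ i) ∧
    ((1 / 2 : ℝ) < lam → (0 : ℝ) < 2 - lam⁻¹) :=
  stmt17_general S hSsymm E hE hEne μ hμS hμ0 lam hPSD
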